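/- A connected stable ribbon graph Γ is a tree (that is, its loop number ℓ(Γ) = 2g(Γ) + B(Γ) − 1 vanishes) if and only if b₁(Γ) = 0 and every vertex v satisfies g(v) = 0, b(v) = 0 and |C(v)| = 1 (so every vertex consists of a single cycle, necessarily of valency at least 3). Moreover, every tree Γ satisfies g(Γ) = 0, β_Γ# = 1 (equivalently B(Γ) = 1), and has at least three legs: |L(Γ)| ≥ 3. -/

import Mathlib

noncomputable section

/-- The set of orbits ("cycles", counting fixed points, i.e. `1`-cycles)
of a permutation `σ` of `α`: each orbit is recorded as the set of points
in the same cycle of `σ` as some given point. -/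
def permOrbits {α : Type*} (σ : Equiv.Perm α) : Set (Set α) :=
  Set.range fun a => {x | σ.SameCycle a x}

/-- The data of a stable ribbon graph (the stability and connectedness conditions
are stated separately as `RibbonGraph.IsStable` and `RibbonGraph.Connected`):
a finite set `H` of half-edges, a finite set `V` of vertices, an incidence map
`ρ : H → V`, an involution `κ` of `H` (whose fixed points are the legs and whose
`2`-element orbits are the edges), a permutation `c` of `H` preserving each fiber
of `ρ` (whose orbits inside `ρ⁻¹(v)` form the cyclic decomposition `C(v)` of the
vertex `v`), and genus and boundary functions `g, b : V → ℕ`. -/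
structure RibbonGraph where
  /-- the half-edges -/
  H : Type
  /-- the vertices -/
  V : Type
  fintH : Fintype H
  fintV : Fintype V
  /-- the incidence map -/
  ρ : H → V
  /-- the involution determining the legs and the edges -/
  κ : Equiv.Perm H
  κ_invol : ∀ h, κ (κ h) = h
  /-- the permutation determining the cyclic decomposition of each vertex -/
  c : Equiv.Perm H
  c_fiber : ∀ h, ρ (c h) = ρ h
  /-- the genus of each vertex -/
  g : V → ℕ
  /-- the boundary of each vertex -/
  b : V → ℕ

attribute [instance] RibbonGraph.fintH RibbonGraph.fintV

namespace RibbonGraph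

variable (Γ : RibbonGraph)

/-- The set `L(Γ)` of legs: the fixed points of the involution `κ`. -/
def legSet : Set Γ.H := {h | Γ.κ h = h}

/-- `|L(Γ)|`, the number of legs. -/
def numLegs : ℕ := Γ.legSet.ncard

/-- The set `E(Γ)` of edges: the `2`-element orbits of the involution `κ`. -/
def edgeSet : Set (Set Γ.H) := {S | ∃ h, Γ.κ h ≠ h ∧ S = {h, Γ.κ h}}

/-- `|E(Γ)|`, the number of edges. -/
def numEdges : ℕ := Γ.edgeSet.ncard

/-- `|v|`, the valency of a vertex: the number of incident half-edges. -/
def valency (v : Γ.V) : ℕ := {h | Γ.ρ h = v}.ncard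

/-- `|C(v)|`, the number of cycles in the cyclic decomposition of the vertex `v`:
the number of orbits of `c` contained in the fiber `ρ⁻¹(v)`. -/
def numCyclesAt (v : Γ.V) : ℕ := {S ∈ permOrbits Γ.c | ∃ h ∈ S, Γ.ρ h = v}.ncard

/-- `|C(Γ)|`, the total number of orbits of the permutation `c`. -/
def numCycles : ℕ := (permOrbits Γ.c).ncard

/-- `β_Γ#`, the number of orbits (cycles, counting fixed points) of the composite
permutation `c ∘ κ`. -/
def betaSharp : ℕ := (permOrbits (Γ.c * Γ.κ)).ncard

/-- The loop number `l(v) = 2 g(v) + b(v) + |C(v)| − 1` of a vertex. -/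
def vertexLoop (v : Γ.V) : ℚ := 2 * Γ.g v + Γ.b v + Γ.numCyclesAt v - 1

/-- Stability: `|C(v)| + b(v) > 0` and `2 l(v) + |v| ≥ 3` for every vertex. -/
def IsStable : Prop :=
  ∀ v : Γ.V, 0 < Γ.numCyclesAt v + Γ.b v ∧ 3 ≤ 2 * Γ.vertexLoop v + Γ.valency v

/-- The relation on vertices relating `ρ(h)` to `ρ(κ(h))` for each half-edge `h`. -/
def adjRel : Γ.V → Γ.V → Prop := fun v w => ∃ h, Γ.ρ h = v ∧ Γ.ρ (Γ.κ h) = w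

/-- Connectedness: the vertex set is nonempty and the equivalence relation generated
by `adjRel` relates any two vertices. -/
def Connected : Prop :=
  Nonempty Γ.V ∧ ∀ v w : Γ.V, Relation.EqvGen Γ.adjRel v w

/-- The first Betti number `b₁(Γ) = |E(Γ)| − |V(Γ)| + 1` of a connected graph. -/
def betti : ℚ := (Γ.numEdges : ℚ) - Fintype.card Γ.V + 1

/-- The genus `g(Γ) = 1 − |V(Γ)| + (|E(Γ)| + |C(Γ)| − β_Γ#)/2 + Σ_v g(v)` of a
connected stable ribbon graph. -/
def genus : ℚ :=
  1 - (Fintype.card Γ.V : ℚ) + ((Γ.numEdges : ℚ) + Γ.numCycles - Γ.betaSharp) / 2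
    + ∑ v, (Γ.g v : ℚ)

/-- The number of boundary components `B(Γ) = β_Γ# + Σ_v b(v)`. -/
def numBoundary : ℚ := (Γ.betaSharp : ℚ) + ∑ v, (Γ.b v : ℚ)

/-- The loop number `ℓ(Γ) = 2 g(Γ) + B(Γ) − 1`. -/
def loopNumber : ℚ := 2 * Γ.genus + Γ.numBoundary - 1

end RibbonGraph

/-!
Summing the definitions gives `ℓ(Γ) = b₁(Γ) + Σ_v l(v)`, where `b₁(Γ) ≥ 0` by connectedness and
`l(v) ≥ 0` by stability. Moreover `l(v) = 0` forces `|C(v)| = 1`: otherwise `b(v) = 1` and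
`|C(v)| = 0`, so `v` carries no half-edge, while stability demands at least three.

For a tree, contract an edge `{a, κ a}` joining two distinct vertices: replacing `κ` by
`(a κa) κ` and `c` by `c (a κa)` merges the two vertex cycles into one and leaves `c κ`
unchanged. Induction on the number of edges ends with a single vertex and no edges, where
`c κ = c` is a single cycle; so `β_Γ# = 1`. The same contraction shows `|V| ≤ |E| + 1` for every
connected graph. Then `B(Γ) = 1` and `ℓ(Γ) = 0` give `g(Γ) = 0`, and counting half-edges gives
`|L(Γ)| = Σ_v |v| − 2|E| ≥ 3|V| − 2(|V| − 1) ≥ 3`.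
-/

open Equiv

namespace Equiv.Perm

variable {α : Type*} {c : Perm α} {a b x y : α}

theorem SameCycle.of_forall_rel_apply {r : α → α → Prop} (hr : Equivalence r)
    (hc : ∀ z, r z (c z)) (h : c.SameCycle x y) : r x y := by
  obtain ⟨i, rfl⟩ := h
  induction i using Int.induction_on with
  | zero => exact hr.refl x
  | succ i ih =>
    rw [add_comm, zpow_add, zpow_one, mul_apply]
    exact hr.trans ih (hc _)
  | pred i ih =>
    rw [sub_eq_neg_add, zpow_add, zpow_neg_one, mul_apply]
    exact hr.trans ih (hr.symm (by simpa using hc (c⁻¹ ((c ^ (-i : ℤ)) x))))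

theorem SameCycle.apply_eq {β : Type*} {f : α → β} (hf : ∀ z, f (c z) = f z)
    (h : c.SameCycle x y) : f x = f y :=
  h.of_forall_rel_apply (r := fun x y => f x = f y) ⟨fun _ => Eq.refl _, Eq.symm, Eq.trans⟩
    fun z => (hf z).symm

variable [DecidableEq α] [Finite α]

/-- Starting from `a`, the permutation `c * swap a b` runs through the `c`-cycle of `b`, which
does not contain `a`, until it comes back to `b`. -/
theorem sameCycle_mul_swap_of_not_sameCycle (hab : ¬ c.SameCycle a b) :
    (c * swap a b).SameCycle a b := by
  by_contra hab'
  have hcycle : ∀ n : ℕ, (c * swap a b).SameCycle a ((c ^ (n + 1)) b) := by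
    intro n
    induction n with
    | zero => simpa using (SameCycle.refl (c * swap a b) a).apply_right
    | succ n ih =>
      have hne_a : (c ^ (n + 1)) b ≠ a := fun he =>
        hab (by rw [← he]; exact (sameCycle_pow_right.2 (SameCycle.refl c b)).symm)
      have hne_b : (c ^ (n + 1)) b ≠ b := fun he => hab' (by rwa [he] at ih)
      rw [pow_succ', mul_apply, ← swap_apply_of_ne_of_ne hne_a hne_b, ← mul_apply]
      exact ih.apply_right
  obtain ⟨n, hn⟩ : ∃ n, orderOf c = n + 1 := Nat.exists_eq_add_one.2 (orderOf_pos c)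
  exact hab' (by simpa [← hn, pow_orderOf_eq_one] using hcycle n)

theorem SameCycle.mul_swap_of_not_sameCycle (hab : ¬ c.SameCycle a b)
    (h : c.SameCycle x y) : (c * swap a b).SameCycle x y := by
  have hab' := sameCycle_mul_swap_of_not_sameCycle hab
  refine h.of_forall_rel_apply (SameCycle.setoid _).iseqv fun z => ?_
  by_cases hza : z = a
  · subst hza
    simpa using hab'.apply_right
  by_cases hzb : z = b
  · subst hzb
    simpa using hab'.symm.apply_right
  · simpa [swap_apply_of_ne_of_ne hza hzb] using (SameCycle.refl (c * swap a b) z).apply_right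

end Equiv.Perm

theorem ncard_permOrbits_eq_one {α : Type*} [Nonempty α] {σ : Perm α}
    (h : ∀ x y, σ.SameCycle x y) : (permOrbits σ).ncard = 1 := by
  have horbit : (fun a => {x | σ.SameCycle a x}) = fun _ => Set.univ :=
    funext fun a => Set.eq_univ_of_forall (h a)
  rw [permOrbits, horbit, Set.range_const, Set.ncard_singleton]

namespace RibbonGraph

section HalfEdgeData

variable {H V : Type*}

def HalfEdgeAdj (ρ : H → V) (κ : Perm H) (x y : H) : Prop := ρ x = ρ y ∨ κ x = y

/-- Unlike `RibbonGraph.Connected`, this does not see vertices without half-edges. -/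
def HalfEdgeConnected (ρ : H → V) (κ : Perm H) : Prop :=
  ∀ x y, Relation.EqvGen (HalfEdgeAdj ρ κ) x y

section Contraction

variable [DecidableEq V]

def mergeFiber (ρ : H → V) (v w : V) (x : H) : V := if ρ x = v then w else ρ x

theorem ncard_range_mergeFiber_add_one [Finite H] {ρ : H → V} {a b : H} (hab : ρ a ≠ ρ b) :
    (Set.range (mergeFiber ρ (ρ a) (ρ b))).ncard + 1 = (Set.range ρ).ncard := by
  have hrange : Set.range (mergeFiber ρ (ρ a) (ρ b)) = Set.range ρ \ {ρ a} := by
    ext v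
    simp only [mergeFiber, Set.mem_range, Set.mem_sdiff, Set.mem_singleton_iff]
    constructor
    · rintro ⟨x, rfl⟩
      split_ifs with hx
      · exact ⟨⟨b, rfl⟩, hab.symm⟩
      · exact ⟨⟨x, rfl⟩, hx⟩
    · rintro ⟨⟨x, rfl⟩, hx⟩
      exact ⟨x, if_neg hx⟩
  rw [hrange, Set.ncard_sdiff_singleton_add_one (Set.mem_range_self a)]

variable [DecidableEq H] {ρ : H → V} {κ c : Perm H} {a b x : H}

theorem swap_mul_apply_of_ne (hκ : Function.Involutive κ) (hxa : x ≠ a) (hxb : x ≠ κ a) :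
    (swap a (κ a) * κ) x = κ x :=
  swap_apply_of_ne_of_ne (fun h => hxb (by rw [← h, hκ x])) (hκ.injective.ne hxa)

theorem _root_.Function.Involutive.swap_mul (hκ : Function.Involutive κ) (a : H) :
    Function.Involutive (swap a (κ a) * κ) := by
  intro x
  by_cases hxa : x = a
  · simp [hxa]
  by_cases hxb : x = κ a
  · simp [hxb, hκ a]
  have hκxa : κ x ≠ a := fun h => hxb (by rw [← h, hκ x])
  have hκxb : κ x ≠ κ a := hκ.injective.ne hxa
  rw [swap_mul_apply_of_ne hκ hxa hxb, swap_mul_apply_of_ne hκ hκxa hκxb, hκ x]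

theorem ncard_nonfixed_swap_mul_add_two [Finite H] (hκ : Function.Involutive κ) (ha : κ a ≠ a) :
    {x | (swap a (κ a) * κ) x ≠ x}.ncard + 2 = {x | κ x ≠ x}.ncard := by
  have hset : {x | (swap a (κ a) * κ) x ≠ x} = {x | κ x ≠ x} \ {a, κ a} := by
    ext x
    by_cases hxa : x = a
    · simp [hxa]
    by_cases hxb : x = κ a
    · simp [hxb, hκ a]
    show (swap a (κ a) * κ) x ≠ x ↔ _
    rw [swap_mul_apply_of_ne hκ hxa hxb]
    simp [hxa, hxb]
  have hsub : ({a, κ a} : Set H) ⊆ {x | κ x ≠ x} := by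
    rintro x (rfl | rfl)
    · exact ha
    · exact fun h => ha ((hκ a).symm.trans h).symm
  rw [hset, ← Set.ncard_sdiff_add_ncard_of_subset hsub, Set.ncard_pair ha.symm]

theorem HalfEdgeConnected.contract (hκ : Function.Involutive κ) (hconn : HalfEdgeConnected ρ κ)
    (a : H) : HalfEdgeConnected (mergeFiber ρ (ρ a) (ρ (κ a))) (swap a (κ a) * κ) := by
  refine fun x y => Relation.EqvGen.mono (fun x y hxy => ?_) x y (hconn x y)
  rcases hxy with hxy | rfl
  · exact Or.inl (by simp only [mergeFiber, hxy])
  by_cases hxa : x = a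
  · subst hxa
    left
    simp [mergeFiber]
  by_cases hxb : x = κ a
  · subst hxb
    left
    simp [mergeFiber, hκ a]
  exact Or.inr (swap_mul_apply_of_ne hκ hxa hxb)

theorem mergeFiber_mul_swap_apply (hρc : ∀ x, ρ (c x) = ρ x) (x : H) :
    mergeFiber ρ (ρ a) (ρ b) ((c * swap a b) x) = mergeFiber ρ (ρ a) (ρ b) x := by
  by_cases hxa : x = a
  · subst hxa
    simp [mergeFiber, hρc]
  by_cases hxb : x = b
  · subst hxb
    simp [mergeFiber, hρc]
  · simp [mergeFiber, swap_apply_of_ne_of_ne hxa hxb, hρc]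

theorem sameCycle_mul_swap_of_mergeFiber_eq [Finite H] (hρc : ∀ x, ρ (c x) = ρ x)
    (hfib : ∀ x y, ρ x = ρ y → c.SameCycle x y) (hab : ρ a ≠ ρ b) {x y : H}
    (hxy : mergeFiber ρ (ρ a) (ρ b) x = mergeFiber ρ (ρ a) (ρ b) y) :
    (c * swap a b).SameCycle x y := by
  have hc : ¬ c.SameCycle a b := fun h => hab (h.apply_eq hρc)
  have hlift : ∀ {x y}, ρ x = ρ y → (c * swap a b).SameCycle x y :=
    fun h => (hfib _ _ h).mul_swap_of_not_sameCycle hc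
  have hmerge := Perm.sameCycle_mul_swap_of_not_sameCycle hc
  simp only [mergeFiber] at hxy
  split_ifs at hxy with hx hy hy
  · exact hlift (hx.trans hy.symm)
  · exact (hlift hx).trans (hmerge.trans (hlift hxy))
  · exact (hlift hxy).trans (hmerge.symm.trans (hlift hy.symm))
  · exact hlift hxy

end Contraction

theorem HalfEdgeConnected.apply_eq_of_forall_loop {ρ : H → V} {κ : Perm H} (hconn : HalfEdgeConnected ρ κ)
    (hloop : ∀ x, ρ (κ x) = ρ x) (x y : H) : ρ x = ρ y := by
  have hle : HalfEdgeAdj ρ κ ≤ Setoid.ker ρ := by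
    rintro x y (hxy | rfl)
    exacts [hxy, (hloop x).symm]
  exact (Setoid.ker ρ).iseqv.eqvGen_iff.1 (Relation.EqvGen.mono hle x y (hconn x y))

theorem HalfEdgeConnected.ncard_range_le_one_of_forall_loop [Finite H] {ρ : H → V} {κ : Perm H}
    (hconn : HalfEdgeConnected ρ κ) (hloop : ∀ x, ρ (κ x) = ρ x) : (Set.range ρ).ncard ≤ 1 := by
  rw [Set.ncard_le_one]
  rintro _ ⟨x, rfl⟩ _ ⟨y, rfl⟩
  exact hconn.apply_eq_of_forall_loop hloop x y

theorem HalfEdgeConnected.two_mul_ncard_range_le [Finite H] {ρ : H → V} {κ : Perm H}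
    (hκ : Function.Involutive κ)
    (hconn : HalfEdgeConnected ρ κ) : 2 * (Set.range ρ).ncard ≤ {x | κ x ≠ x}.ncard + 2 := by
  classical
  by_cases hloop : ∀ x, ρ (κ x) = ρ x
  · have := hconn.ncard_range_le_one_of_forall_loop hloop
    omega
  obtain ⟨a, ha⟩ := not_forall.1 hloop
  have hE := ncard_nonfixed_swap_mul_add_two hκ (a := a) fun h => ha (by rw [h])
  have hV := ncard_range_mergeFiber_add_one (Ne.symm ha)
  have := (hconn.contract hκ a).two_mul_ncard_range_le (hκ.swap_mul a)
  omega
termination_by {x | κ x ≠ x}.ncard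
decreasing_by omega

theorem HalfEdgeConnected.sameCycle_mul [Finite H] {ρ : H → V} {κ c : Perm H}
    (hκ : Function.Involutive κ)
    (hρc : ∀ x, ρ (c x) = ρ x) (hfib : ∀ x y, ρ x = ρ y → c.SameCycle x y)
    (hconn : HalfEdgeConnected ρ κ)
    (hcount : {x | κ x ≠ x}.ncard + 2 ≤ 2 * (Set.range ρ).ncard) (x y : H) :
    (c * κ).SameCycle x y := by
  classical
  by_cases hloop : ∀ x, ρ (κ x) = ρ x
  · have := hconn.ncard_range_le_one_of_forall_loop hloop
    have hκ1 : κ = 1 := by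
      ext z
      by_contra hz
      have := (Set.ncard_pos (s := {x | κ x ≠ x})).2 ⟨z, hz⟩
      omega
    rw [hκ1, mul_one]
    exact hfib x y (hconn.apply_eq_of_forall_loop hloop x y)
  obtain ⟨a, ha⟩ := not_forall.1 hloop
  have hE := ncard_nonfixed_swap_mul_add_two hκ (a := a) fun h => ha (by rw [h])
  have hV := ncard_range_mergeFiber_add_one (Ne.symm ha)
  have := (hconn.contract hκ a).sameCycle_mul (c := c * swap a (κ a)) (hκ.swap_mul a)
    (mergeFiber_mul_swap_apply hρc)
    (fun _ _ => sameCycle_mul_swap_of_mergeFiber_eq hρc hfib (Ne.symm ha)) (by omega) x y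
  rwa [mul_assoc, swap_mul_self_mul] at this
termination_by {x | κ x ≠ x}.ncard
decreasing_by omega

end HalfEdgeData

variable (Γ : RibbonGraph)

theorem two_mul_numEdges : 2 * Γ.numEdges = {x | Γ.κ x ≠ x}.ncard := by
  have hpair_eq : ∀ {h x}, x ∈ ({h, Γ.κ h} : Set Γ.H) → ({h, Γ.κ h} : Set Γ.H) = {x, Γ.κ x} := by
    rintro h x (rfl | rfl)
    · rfl
    · rw [Γ.κ_invol, Set.pair_comm]
  have hunion : {x | Γ.κ x ≠ x} = ⋃ S ∈ Γ.edgeSet, id S := by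
    ext x
    simp only [Set.mem_iUnion, edgeSet, id, exists_prop]
    constructor
    · intro hx
      exact ⟨{x, Γ.κ x}, ⟨x, hx, rfl⟩, Set.mem_insert x _⟩
    · rintro ⟨_, ⟨h, hh, rfl⟩, rfl | rfl⟩
      · exact hh
      · show Γ.κ (Γ.κ h) ≠ Γ.κ h
        rw [Γ.κ_invol]
        exact Ne.symm hh
  have hdisj : Γ.edgeSet.PairwiseDisjoint id := by
    rintro _ ⟨h, -, rfl⟩ _ ⟨h', -, rfl⟩ hne
    exact Set.disjoint_left.2 fun x hx hx' => hne ((hpair_eq hx).trans (hpair_eq hx').symm)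
  have hcard : ∀ S ∈ Γ.edgeSet, (id S).ncard = 2 * 1 := by
    rintro _ ⟨h, hh, rfl⟩
    exact Set.ncard_pair hh.symm
  rw [hunion, (Set.toFinite _).ncard_biUnion (fun _ _ => Set.toFinite _) hdisj,
    finsum_mem_congr rfl hcard, ← mul_finsum_mem, finsum_one, numEdges]

theorem numLegs_add_two_mul_numEdges : Γ.numLegs + 2 * Γ.numEdges = Fintype.card Γ.H := by
  rw [two_mul_numEdges, numLegs, ← Nat.card_eq_fintype_card,
    ← Set.ncard_add_ncard_compl Γ.legSet]
  rfl

theorem sum_valency : ∑ v, Γ.valency v = Fintype.card Γ.H := by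
  have hunion : (Set.univ : Set Γ.H) = ⋃ v, {h | Γ.ρ h = v} := by
    ext h
    simp
  have hdisj : Pairwise (Function.onFun Disjoint fun v => {h | Γ.ρ h = v}) := fun v w hvw =>
    Set.disjoint_left.2 fun h hv hw => hvw (hv.symm.trans hw)
  rw [← Nat.card_eq_fintype_card, ← Set.ncard_univ, hunion,
    Set.ncard_iUnion_of_finite (fun _ => Set.toFinite _) hdisj, finsum_eq_sum_of_fintype]
  rfl

theorem numCycles_eq_sum_numCyclesAt : Γ.numCycles = ∑ v, Γ.numCyclesAt v := by
  have hunion : permOrbits Γ.c = ⋃ v, {S ∈ permOrbits Γ.c | ∃ h ∈ S, Γ.ρ h = v} := by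
    ext S
    simp only [Set.mem_iUnion, Set.mem_sep_iff]
    constructor
    · rintro ⟨a, rfl⟩
      exact ⟨Γ.ρ a, ⟨a, rfl⟩, a, Equiv.Perm.SameCycle.refl _ _, rfl⟩
    · rintro ⟨-, hS, -⟩
      exact hS
  have hdisj : Pairwise (Function.onFun Disjoint
      fun v => {S ∈ permOrbits Γ.c | ∃ h ∈ S, Γ.ρ h = v}) := by
    intro v w hvw
    refine Set.disjoint_left.2 ?_
    rintro _ ⟨⟨a, rfl⟩, h, hh, rfl⟩ ⟨-, h', hh', rfl⟩
    exact hvw ((hh.symm.trans hh').apply_eq Γ.c_fiber)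
  rw [numCycles, hunion, Set.ncard_iUnion_of_finite (fun _ => Set.toFinite _) hdisj,
    finsum_eq_sum_of_fintype]
  rfl

theorem loopNumber_eq_betti_add_sum_vertexLoop :
    Γ.loopNumber = Γ.betti + ∑ v, Γ.vertexLoop v := by
  simp only [loopNumber, genus, numBoundary, betti, vertexLoop, numCycles_eq_sum_numCyclesAt,
    Nat.cast_sum, Finset.sum_sub_distrib, Finset.sum_add_distrib, ← Finset.mul_sum,
    Finset.sum_const, Finset.card_univ, nsmul_eq_mul, mul_one]
  ring

theorem betti_eq_zero_iff : Γ.betti = 0 ↔ Γ.numEdges + 1 = Fintype.card Γ.V := by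
  rw [betti, ← @Nat.cast_inj ℚ]
  push_cast
  constructor <;> intro h <;> linarith

variable {Γ}

theorem numCyclesAt_pos_iff {v : Γ.V} : 0 < Γ.numCyclesAt v ↔ ∃ h, Γ.ρ h = v := by
  rw [numCyclesAt, Set.ncard_pos]
  constructor
  · rintro ⟨_, -, h, -, hh⟩
    exact ⟨h, hh⟩
  · rintro ⟨h, hh⟩
    exact ⟨_, ⟨h, rfl⟩, h, Equiv.Perm.SameCycle.refl _ _, hh⟩

theorem valency_pos_iff {v : Γ.V} : 0 < Γ.valency v ↔ ∃ h, Γ.ρ h = v :=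
  Set.ncard_pos

theorem sameCycle_of_numCyclesAt_eq_one {x y : Γ.H} (hC : Γ.numCyclesAt (Γ.ρ y) = 1)
    (hxy : Γ.ρ x = Γ.ρ y) : Γ.c.SameCycle x y := by
  have horbit : ∀ z, Γ.ρ z = Γ.ρ y →
      {w | Γ.c.SameCycle z w} ∈ {S ∈ permOrbits Γ.c | ∃ h ∈ S, Γ.ρ h = Γ.ρ y} :=
    fun z hz => ⟨⟨z, rfl⟩, z, Equiv.Perm.SameCycle.refl _ _, hz⟩
  rw [numCyclesAt] at hC
  have hsub := Set.ncard_le_one_iff_subsingleton.1 hC.le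
  have hy : y ∈ {w | Γ.c.SameCycle y w} := Equiv.Perm.SameCycle.refl _ _
  rwa [← hsub (horbit x hxy) (horbit y rfl)] at hy

theorem vertexLoop_nonneg (hstable : Γ.IsStable) (v : Γ.V) : 0 ≤ Γ.vertexLoop v := by
  have : (1 : ℚ) ≤ Γ.numCyclesAt v + Γ.b v := by exact_mod_cast (hstable v).1
  have : (0 : ℚ) ≤ Γ.g v := Nat.cast_nonneg _
  rw [vertexLoop]
  linarith

theorem three_le_valency_of_vertexLoop_eq_zero (hstable : Γ.IsStable) {v : Γ.V}
    (h : Γ.vertexLoop v = 0) : 3 ≤ Γ.valency v := by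
  have := (hstable v).2
  rw [h, mul_zero, zero_add] at this
  exact_mod_cast this

theorem vertexLoop_eq_zero_iff (hstable : Γ.IsStable) {v : Γ.V} :
    Γ.vertexLoop v = 0 ↔ Γ.g v = 0 ∧ Γ.b v = 0 ∧ Γ.numCyclesAt v = 1 := by
  constructor
  · intro h
    have hsum : 2 * Γ.g v + Γ.b v + Γ.numCyclesAt v = 1 := by
      rw [vertexLoop, sub_eq_zero] at h
      exact_mod_cast h
    have hval := three_le_valency_of_vertexLoop_eq_zero hstable h
    have hC : 0 < Γ.numCyclesAt v := numCyclesAt_pos_iff.2 (valency_pos_iff.1 (by omega))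
    omega
  · rintro ⟨hg, hb, hC⟩
    simp [vertexLoop, hg, hb, hC]

theorem Connected.halfEdgeConnected (hconn : Γ.Connected) (hsurj : Function.Surjective Γ.ρ) :
    HalfEdgeConnected Γ.ρ Γ.κ := by
  have hlift : ∀ v w, Relation.EqvGen Γ.adjRel v w → ∀ x y, Γ.ρ x = v → Γ.ρ y = w →
      Relation.EqvGen (HalfEdgeAdj Γ.ρ Γ.κ) x y := by
    intro v w hvw
    induction hvw with
    | rel v w hvw =>
      obtain ⟨h, rfl, rfl⟩ := hvw
      intro x y hx hy
      refine .trans _ _ _ (.rel _ _ (Or.inl hx)) (.trans _ _ _ (.rel _ _ (Or.inr rfl)) ?_)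
      exact .rel _ _ (Or.inl hy.symm)
    | refl v =>
      intro x y hx hy
      exact .rel _ _ (Or.inl (hx.trans hy.symm))
    | symm v w _ ih =>
      intro x y hx hy
      exact .symm _ _ (ih y x hy hx)
    | trans u v w _ _ ih₁ ih₂ =>
      intro x y hx hy
      obtain ⟨z, hz⟩ := hsurj v
      exact .trans _ _ _ (ih₁ x z hx hz) (ih₂ z y hz hy)
  exact fun x y => hlift _ _ (hconn.2 _ _) x y rfl rfl

theorem Connected.eq_of_forall_ρ_ne (hconn : Γ.Connected) {v : Γ.V} (hv : ∀ h, Γ.ρ h ≠ v)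
    (w : Γ.V) : w = v := by
  have hclosed : ∀ u w, Relation.EqvGen Γ.adjRel u w → (u = v ↔ w = v) := by
    intro u w huw
    induction huw with
    | rel u w huw =>
      obtain ⟨h, rfl, rfl⟩ := huw
      exact iff_of_false (hv h) (hv _)
    | refl => exact Iff.rfl
    | symm _ _ _ ih => exact ih.symm
    | trans _ _ _ _ _ ih₁ ih₂ => exact ih₁.trans ih₂
  exact (hclosed v w (hconn.2 v w)).1 rfl

theorem Connected.card_V_le_numEdges_add_one (hconn : Γ.Connected) :
    Fintype.card Γ.V ≤ Γ.numEdges + 1 := by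
  by_cases hsurj : Function.Surjective Γ.ρ
  · have := (hconn.halfEdgeConnected hsurj).two_mul_ncard_range_le Γ.κ_invol
    rw [hsurj.range_eq, Set.ncard_univ, Nat.card_eq_fintype_card, ← two_mul_numEdges] at this
    omega
  · obtain ⟨v, hv⟩ := not_forall.1 hsurj
    have := Fintype.card_le_one_iff.2 fun w u =>
      (hconn.eq_of_forall_ρ_ne (not_exists.1 hv) w).trans
        (hconn.eq_of_forall_ρ_ne (not_exists.1 hv) u).symm
    omega

theorem Connected.betti_nonneg (hconn : Γ.Connected) : 0 ≤ Γ.betti := by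
  have : (Fintype.card Γ.V : ℚ) ≤ Γ.numEdges + 1 := by
    exact_mod_cast hconn.card_V_le_numEdges_add_one
  rw [betti]
  linarith

theorem Connected.betaSharp_eq_one (hconn : Γ.Connected) (hb : Γ.betti = 0)
    (hC : ∀ v, Γ.numCyclesAt v = 1) : Γ.betaSharp = 1 := by
  have hsurj : Function.Surjective Γ.ρ := fun v =>
    numCyclesAt_pos_iff.1 (by rw [hC v]; exact one_pos)
  have : Nonempty Γ.H := hconn.1.map fun v => (hsurj v).choose
  have hcount : {x | Γ.κ x ≠ x}.ncard + 2 ≤ 2 * (Set.range Γ.ρ).ncard := by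
    rw [hsurj.range_eq, Set.ncard_univ, Nat.card_eq_fintype_card, ← two_mul_numEdges,
      ← (betti_eq_zero_iff Γ).1 hb]
    omega
  exact ncard_permOrbits_eq_one fun x y =>
    (hconn.halfEdgeConnected hsurj).sameCycle_mul Γ.κ_invol Γ.c_fiber
      (fun _ _ hxy => sameCycle_of_numCyclesAt_eq_one (hC _) hxy) hcount x y

theorem three_mul_card_V_le (hval : ∀ v, 3 ≤ Γ.valency v) :
    3 * Fintype.card Γ.V ≤ Γ.numLegs + 2 * Γ.numEdges := by
  rw [numLegs_add_two_mul_numEdges, ← sum_valency, mul_comm, ← smul_eq_mul, ← Finset.card_univ,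
    ← Finset.sum_const]
  exact Finset.sum_le_sum fun v _ => hval v

end RibbonGraph

/-- **Characterization of trees among connected stable ribbon graphs.**
A connected stable ribbon graph `Γ` is a tree (that is, its loop number
`ℓ(Γ) = 2 g(Γ) + B(Γ) − 1` vanishes) if and only if `b₁(Γ) = 0` and every vertex `v`
satisfies `g(v) = 0`, `b(v) = 0` and `|C(v)| = 1` (so every vertex consists of a
single cycle).  Moreover, every tree `Γ` satisfies `g(Γ) = 0`, `β_Γ# = 1`
(equivalently `B(Γ) = 1`), and has at least three legs: `|L(Γ)| ≥ 3`. -/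
theorem RibbonGraph.tree_characterization
    (Γ : RibbonGraph) (hstable : Γ.IsStable) (hconn : Γ.Connected) :
    (Γ.loopNumber = 0 ↔
      Γ.betti = 0 ∧ ∀ v : Γ.V, Γ.g v = 0 ∧ Γ.b v = 0 ∧ Γ.numCyclesAt v = 1) ∧
    (Γ.loopNumber = 0 →
      Γ.genus = 0 ∧ Γ.betaSharp = 1 ∧ Γ.numBoundary = 1 ∧ 3 ≤ Γ.numLegs) := by
  have hnonneg := fun v (_ : v ∈ Finset.univ) => Γ.vertexLoop_nonneg hstable v
  have hloop : Γ.loopNumber = 0 ↔ Γ.betti = 0 ∧ ∀ v, Γ.vertexLoop v = 0 := by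
    rw [Γ.loopNumber_eq_betti_add_sum_vertexLoop,
      add_eq_zero_iff_of_nonneg hconn.betti_nonneg (Finset.sum_nonneg hnonneg),
      Finset.sum_eq_zero_iff_of_nonneg hnonneg]
    simp only [Finset.mem_univ, true_implies]
  have htree : Γ.loopNumber = 0 ↔
      Γ.betti = 0 ∧ ∀ v : Γ.V, Γ.g v = 0 ∧ Γ.b v = 0 ∧ Γ.numCyclesAt v = 1 := by
    simp only [hloop, RibbonGraph.vertexLoop_eq_zero_iff hstable]
  refine ⟨htree, fun h0 => ?_⟩
  obtain ⟨hb, hv⟩ := htree.1 h0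
  have hβ := hconn.betaSharp_eq_one hb fun v => (hv v).2.2
  have hB : Γ.numBoundary = 1 := by simp [RibbonGraph.numBoundary, hβ, hv]
  have hg : Γ.genus = 0 := by
    rw [RibbonGraph.loopNumber, hB] at h0
    linarith
  have hE := (Γ.betti_eq_zero_iff).1 hb
  have hlegs := RibbonGraph.three_mul_card_V_le fun v =>
    RibbonGraph.three_le_valency_of_vertexLoop_eq_zero hstable ((hloop.1 h0).2 v)
  have := Fintype.card_pos_iff.2 hconn.1
  exact ⟨hg, hβ, hB, by omega⟩
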